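/- arXiv:1806.03596 — 5 statements merged into one kernel-verified Lean document; each statement's English description precedes it below -/
import Mathlib

section
/- The triple Λ = (W_j, Λ_j, v_j) is a g-fusion frame for H (i.e. there exist 0 < A ≤ B < ∞ with A‖f‖² ≤ Σ_{j∈J} v_j² ‖Λ_j π_{W_j} f‖² ≤ B‖f‖² for all f ∈ H) if and only if the synthesis operator T_Λ : ℋ₂ → H, T_Λ({g_j}) = Σ_{j∈J} v_j π_{W_j} Λ_j* g_j, is well defined, bounded and surjective. -/
/-!
Set `Γ_j = v_j Λ_j π_{W_j}`. Then `‖Γ_j f‖² = v_j² ‖Λ_j π_{W_j} f‖²` and, `π_{W_j}` being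
self-adjoint, `Γ_j* = v_j π_{W_j} Λ_j*`, so the claim is the characterisation of g-frames by
their synthesis operator. A bounded `T : ℓ²(H_j) → H` satisfies `T g = Σ_j Γ_j* g_j` for all `g`
exactly when `T*` is the analysis operator `f ↦ (Γ_j f)_j`, and the frame inequalities say that
the analysis operator is bounded and bounded below. Finally, an operator `U` between Hilbert
spaces is bounded below iff `U*` is surjective: if `U` is bounded below then so is `U*U`, which
therefore has closed range, and that range is dense because its orthogonal complement is
`ker (U*U) = ker U = 0`; conversely the open mapping theorem gives preimages under `U*` of
controlled norm, and pairing with them bounds `‖f‖` by a multiple of `‖U f‖`.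
-/

open scoped InnerProductSpace
open ContinuousLinearMap

/-- The orthogonal projection of `H` onto the closed subspace `W j`, as a map `H →L[ℂ] H`. -/
noncomputable def gfProj {H : Type*} [NormedAddCommGroup H] [InnerProductSpace ℂ H]
    {J : Type*} (W : J → Submodule ℂ H) [∀ j, CompleteSpace (W j)] (j : J) : H →L[ℂ] H :=
  (W j).subtypeL.comp ((W j).orthogonalProjectionOnto)

theorem le_of_sq_le_mul {R : Type*} [Semiring R] [LinearOrder R] [IsStrictOrderedRing R]
    {a b : R} (ha : 0 ≤ a) (hb : 0 ≤ b) (h : a ^ 2 ≤ b * a) : a ≤ b := by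
  rcases ha.eq_or_lt with rfl | ha
  · exact hb
  · exact le_of_mul_le_mul_right (by rwa [sq] at h) ha

section

variable {𝕜 E F : Type*} [RCLike 𝕜] [NormedAddCommGroup E] [InnerProductSpace 𝕜 E]
  [CompleteSpace E] [NormedAddCommGroup F] [InnerProductSpace 𝕜 F] [CompleteSpace F]

theorem ContinuousLinearMap.norm_apply_sq_le_norm_adjoint_comp_self_apply_mul (U : E →L[𝕜] F)
    (x : E) : ‖U x‖ ^ 2 ≤ ‖(adjoint U ∘L U) x‖ * ‖x‖ :=
  calc ‖U x‖ ^ 2 = RCLike.re ⟪(adjoint U ∘L U) x, x⟫_𝕜 := by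
        rw [comp_apply, adjoint_inner_left, inner_self_eq_norm_sq]
    _ ≤ ‖(adjoint U ∘L U) x‖ * ‖x‖ := (RCLike.re_le_norm _).trans (norm_inner_le_norm _ _)

theorem ContinuousLinearMap.range_eq_top_of_antilipschitz {K : NNReal} {S : E →L[𝕜] F}
    (hS : AntilipschitzWith K S) (h : (adjoint S).ker = ⊥) : S.range = ⊤ := by
  have : CompleteSpace S.range := (hS.isClosed_range S.uniformContinuous).completeSpace_coe
  rw [← Submodule.orthogonal_eq_bot_iff, orthogonal_range, h]

theorem ContinuousLinearMap.surjective_adjoint_of_norm_le {U : E →L[𝕜] F} {C : ℝ}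
    (hU : ∀ x, ‖x‖ ≤ C * ‖U x‖) : Function.Surjective (adjoint U) := by
  have hker : U.ker = ⊥ := by
    refine (Submodule.eq_bot_iff _).2 fun x hx => norm_le_zero_iff.1 ?_
    simpa [show U x = 0 from hx] using hU x
  have hS : ∀ x, ‖x‖ ≤ (C ^ 2).toNNReal * ‖(adjoint U ∘L U) x‖ := by
    intro x
    have hsq : ‖x‖ ^ 2 ≤ C ^ 2 * ‖(adjoint U ∘L U) x‖ * ‖x‖ := calc
      ‖x‖ ^ 2 ≤ (C * ‖U x‖) ^ 2 := pow_le_pow_left₀ (norm_nonneg x) (hU x) 2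
      _ = C ^ 2 * ‖U x‖ ^ 2 := by ring
      _ ≤ C ^ 2 * (‖(adjoint U ∘L U) x‖ * ‖x‖) := by
        gcongr; exact U.norm_apply_sq_le_norm_adjoint_comp_self_apply_mul x
      _ = _ := by ring
    rw [Real.coe_toNNReal _ (sq_nonneg C)]
    exact le_of_sq_le_mul (norm_nonneg x) (by positivity) hsq
  have hrange := range_eq_top_of_antilipschitz (antilipschitz_of_bound _ hS)
    (by rw [adjoint_comp, adjoint_adjoint, ker_adjoint_comp_self, hker])
  intro y
  obtain ⟨x, hx⟩ := LinearMap.range_eq_top.1 hrange y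
  exact ⟨U x, hx⟩

theorem ContinuousLinearMap.exists_norm_le_adjoint_of_surjective {T : E →L[𝕜] F}
    (hT : Function.Surjective T) : ∃ C > 0, ∀ y, ‖y‖ ≤ C * ‖adjoint T y‖ := by
  obtain ⟨C, hC, hpre⟩ := T.exists_preimage_norm_le hT
  refine ⟨C, hC, fun y => ?_⟩
  obtain ⟨x, rfl, hx⟩ := hpre y
  have : ‖T x‖ ^ 2 ≤ C * ‖adjoint T (T x)‖ * ‖T x‖ := calc
    ‖T x‖ ^ 2 = RCLike.re ⟪adjoint T (T x), x⟫_𝕜 := by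
      rw [adjoint_inner_left, inner_self_eq_norm_sq]
    _ ≤ ‖adjoint T (T x)‖ * ‖x‖ := (RCLike.re_le_norm _).trans (norm_inner_le_norm _ _)
    _ ≤ ‖adjoint T (T x)‖ * (C * ‖T x‖) := by gcongr
    _ = _ := by ring
  exact le_of_sq_le_mul (norm_nonneg _) (by positivity) this

theorem ContinuousLinearMap.surjective_iff_exists_norm_le_adjoint (T : E →L[𝕜] F) :
    Function.Surjective T ↔ ∃ C > 0, ∀ y, ‖y‖ ≤ C * ‖adjoint T y‖ :=
  ⟨exists_norm_le_adjoint_of_surjective, fun ⟨_, _, hC⟩ => by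
    simpa using surjective_adjoint_of_norm_le hC⟩

end

section

variable {𝕜 H ι : Type*} [RCLike 𝕜] [NormedAddCommGroup H] [InnerProductSpace 𝕜 H]
  {E : ι → Type*} [∀ i, NormedAddCommGroup (E i)] [∀ i, InnerProductSpace 𝕜 (E i)]

theorem memℓp_two_iff_summable_norm_sq {x : ∀ i, E i} :
    Memℓp x 2 ↔ Summable fun i => ‖x i‖ ^ 2 := by
  simpa using memℓp_gen_iff (E := E) (p := 2) (by norm_num)

theorem lp.norm_sq_eq_tsum_norm_sq (x : lp E 2) : ‖x‖ ^ 2 = ∑' i, ‖x i‖ ^ 2 := by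
  simpa using lp.norm_rpow_eq_tsum (p := 2) (by norm_num) x

theorem exists_clm_lp_apply_eq_of_bessel_bound {B : ℝ} (Γ : ∀ i, H →L[𝕜] E i)
    (hΓ : ∀ f, Summable (fun i => ‖Γ i f‖ ^ 2) ∧ ∑' i, ‖Γ i f‖ ^ 2 ≤ B * ‖f‖ ^ 2) :
    ∃ U : H →L[𝕜] lp E 2, ∀ f i, U f i = Γ i f := by
  let U : H →ₗ[𝕜] lp E 2 := (LinearMap.pi fun i => (Γ i : H →ₗ[𝕜] E i)).codRestrict
    (lpSubmodule 𝕜 E 2) fun f => memℓp_two_iff_summable_norm_sq.2 (hΓ f).1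
  refine ⟨U.mkContinuous √B fun f => ?_, fun f i => rfl⟩
  calc ‖U f‖ = √(∑' i, ‖U f i‖ ^ 2) := by
        rw [← lp.norm_sq_eq_tsum_norm_sq, Real.sqrt_sq (norm_nonneg _)]
    _ ≤ √(B * ‖f‖ ^ 2) := Real.sqrt_le_sqrt (hΓ f).2
    _ = √B * ‖f‖ := by rw [Real.sqrt_mul' _ (sq_nonneg _), Real.sqrt_sq (norm_nonneg _)]

def IsGFrame (Γ : ∀ i, H →L[𝕜] E i) : Prop :=
  ∃ A B : ℝ, 0 < A ∧ A ≤ B ∧ ∀ f : H, Summable (fun i => ‖Γ i f‖ ^ 2) ∧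
    A * ‖f‖ ^ 2 ≤ ∑' i, ‖Γ i f‖ ^ 2 ∧ ∑' i, ‖Γ i f‖ ^ 2 ≤ B * ‖f‖ ^ 2

theorem isGFrame_iff_exists_analysis (Γ : ∀ i, H →L[𝕜] E i) :
    IsGFrame Γ ↔ ∃ U : H →L[𝕜] lp E 2, (∀ f i, U f i = Γ i f) ∧
      ∃ C > 0, ∀ f, ‖f‖ ≤ C * ‖U f‖ := by
  constructor
  · rintro ⟨A, B, hA, -, hΓ⟩
    obtain ⟨U, hU⟩ := exists_clm_lp_apply_eq_of_bessel_bound Γ fun f => ⟨(hΓ f).1, (hΓ f).2.2⟩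
    refine ⟨U, hU, (√A)⁻¹, by positivity, fun f => ?_⟩
    rw [le_inv_mul_iff₀ (Real.sqrt_pos.2 hA)]
    calc √A * ‖f‖ = √(A * ‖f‖ ^ 2) := by
          rw [Real.sqrt_mul hA.le, Real.sqrt_sq (norm_nonneg _)]
      _ ≤ √(∑' i, ‖U f i‖ ^ 2) := by simpa only [hU] using Real.sqrt_le_sqrt (hΓ f).2.1
      _ = ‖U f‖ := by rw [← lp.norm_sq_eq_tsum_norm_sq, Real.sqrt_sq (norm_nonneg _)]
  · rintro ⟨U, hU, C, hC, hUC⟩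
    have hnorm : ∀ f, ∑' i, ‖Γ i f‖ ^ 2 = ‖U f‖ ^ 2 := fun f => by
      simp only [lp.norm_sq_eq_tsum_norm_sq, hU]
    refine ⟨(C ^ 2)⁻¹, max (C ^ 2)⁻¹ (‖U‖ ^ 2), by positivity, le_max_left _ _, fun f => ?_⟩
    refine ⟨by simpa only [hU] using memℓp_two_iff_summable_norm_sq.1 (U f).2, ?_, ?_⟩
    · rw [hnorm, inv_mul_le_iff₀ (by positivity)]
      calc ‖f‖ ^ 2 ≤ (C * ‖U f‖) ^ 2 := pow_le_pow_left₀ (norm_nonneg f) (hUC f) 2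
        _ = C ^ 2 * ‖U f‖ ^ 2 := mul_pow _ _ _
    · calc ∑' i, ‖Γ i f‖ ^ 2 = ‖U f‖ ^ 2 := hnorm f
        _ ≤ (‖U‖ * ‖f‖) ^ 2 := pow_le_pow_left₀ (norm_nonneg _) (U.le_opNorm f) 2
        _ ≤ max (C ^ 2)⁻¹ (‖U‖ ^ 2) * ‖f‖ ^ 2 := by
          rw [mul_pow]; gcongr; exact le_max_right _ _

variable [CompleteSpace H] [∀ i, CompleteSpace (E i)]

theorem adjoint_apply_eq_iff_apply_lp_single [DecidableEq ι] (T : lp E 2 →L[𝕜] H)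
    (Γ : ∀ i, H →L[𝕜] E i) (i : ι) :
    (∀ f, adjoint T f i = Γ i f) ↔ ∀ x, T (lp.single 2 i x) = adjoint (Γ i) x := by
  have key : ∀ f x, ⟪adjoint T f i, x⟫_𝕜 = ⟪f, T (lp.single 2 i x)⟫_𝕜 := fun f x => by
    rw [← lp.inner_single_right, adjoint_inner_left]
  refine ⟨fun h x => ext_inner_left 𝕜 fun f => ?_, fun h f => ext_inner_right 𝕜 fun x => ?_⟩
  · rw [← key, h, adjoint_inner_right]
  · rw [key, h, adjoint_inner_right]

theorem hasSum_adjoint_apply_iff_adjoint_apply_eq (T : lp E 2 →L[𝕜] H) (Γ : ∀ i, H →L[𝕜] E i) :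
    (∀ g : lp E 2, HasSum (fun i => adjoint (Γ i) (g i)) (T g)) ↔
      ∀ f i, adjoint T f i = Γ i f := by
  classical
  simp only [forall_comm (α := H), adjoint_apply_eq_iff_apply_lp_single]
  constructor
  · intro h i x
    refine (h (lp.single 2 i x)).unique ?_
    convert hasSum_single i fun j hj => ?_
    · simp
    · simp [Pi.single_eq_of_ne hj]
  · intro h g
    simpa only [h] using (lp.hasSum_single ENNReal.ofNat_ne_top g).mapL T

theorem isGFrame_iff_exists_surjective_synthesis (Γ : ∀ i, H →L[𝕜] E i) :
    IsGFrame Γ ↔ ∃ T : lp E 2 →L[𝕜] H, Function.Surjective T ∧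
      ∀ g : lp E 2, HasSum (fun i => adjoint (Γ i) (g i)) (T g) := by
  simp only [isGFrame_iff_exists_analysis, surjective_iff_exists_norm_le_adjoint,
    hasSum_adjoint_apply_iff_adjoint_apply_eq]
  exact ⟨fun ⟨U, hU, hC⟩ => ⟨adjoint U, by simpa using hC, by simpa using hU⟩,
    fun ⟨T, hC, hT⟩ => ⟨adjoint T, hT, hC⟩⟩

end

section GFusion

variable {H J : Type*} [NormedAddCommGroup H] [InnerProductSpace ℂ H] {Hs : J → Type*}
  [∀ j, NormedAddCommGroup (Hs j)] [∀ j, InnerProductSpace ℂ (Hs j)]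
  (W : J → Submodule ℂ H) [∀ j, CompleteSpace (W j)] (v : J → ℝ) (Λ : ∀ j, H →L[ℂ] Hs j)

theorem gfProj_eq_starProjection (j : J) : gfProj W j = (W j).starProjection := rfl

theorem norm_smul_comp_gfProj_apply_sq (j : J) (f : H) :
    ‖((v j : ℂ) • (Λ j ∘L gfProj W j)) f‖ ^ 2 = v j ^ 2 * ‖Λ j (gfProj W j f)‖ ^ 2 := by
  rw [smul_apply, comp_apply, norm_smul, mul_pow, Complex.norm_real, Real.norm_eq_abs, sq_abs]

theorem adjoint_smul_comp_gfProj_apply [CompleteSpace H] [∀ j, CompleteSpace (Hs j)] (j : J)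
    (x : Hs j) :
    adjoint ((v j : ℂ) • (Λ j ∘L gfProj W j)) x = v j • gfProj W j (adjoint (Λ j) x) := by
  rw [map_smulₛₗ, adjoint_comp, gfProj_eq_starProjection,
    (isSelfAdjoint_starProjection (W j)).adjoint_eq, Complex.conj_ofReal, smul_apply, comp_apply,
    Complex.coe_smul]

end GFusion

theorem gfusion_frame_iff_synthesis_surjective_general
    {H : Type*} [NormedAddCommGroup H] [InnerProductSpace ℂ H] [CompleteSpace H]
    {J : Type*}
    {Hs : J → Type*} [∀ j, NormedAddCommGroup (Hs j)] [∀ j, InnerProductSpace ℂ (Hs j)]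
    [∀ j, CompleteSpace (Hs j)]
    (W : J → Submodule ℂ H) [∀ j, CompleteSpace (W j)]
    (v : J → ℝ)
    (Λ : ∀ j, H →L[ℂ] Hs j) :
    (∃ A B : ℝ, 0 < A ∧ A ≤ B ∧
      ∀ f : H,
        Summable (fun j => (v j) ^ 2 * ‖Λ j (gfProj W j f)‖ ^ 2) ∧
        A * ‖f‖ ^ 2 ≤ ∑' j, (v j) ^ 2 * ‖Λ j (gfProj W j f)‖ ^ 2 ∧
        ∑' j, (v j) ^ 2 * ‖Λ j (gfProj W j f)‖ ^ 2 ≤ B * ‖f‖ ^ 2)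
      ↔
    ∃ T : lp Hs 2 →L[ℂ] H, Function.Surjective T ∧
      ∀ g : lp Hs 2,
        HasSum (fun j => v j • gfProj W j (adjoint (Λ j) (g j))) (T g) := by
  simpa only [IsGFrame, norm_smul_comp_gfProj_apply_sq, adjoint_smul_comp_gfProj_apply] using
    isGFrame_iff_exists_surjective_synthesis fun j => (v j : ℂ) • (Λ j ∘L gfProj W j)

/-- `Λ = (W_j, Λ_j, v_j)` is a g-fusion frame for `H` iff the synthesis operator
`T_Λ` is well defined, bounded and surjective. -/
theorem gfusion_frame_iff_synthesis_surjective
    {H : Type*} [NormedAddCommGroup H] [InnerProductSpace ℂ H] [CompleteSpace H]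
    {J : Type*} [Countable J]
    {Hs : J → Type*} [∀ j, NormedAddCommGroup (Hs j)] [∀ j, InnerProductSpace ℂ (Hs j)]
    [∀ j, CompleteSpace (Hs j)]
    (W : J → Submodule ℂ H) [∀ j, CompleteSpace (W j)]
    (v : J → ℝ) (hv : ∀ j, 0 < v j)
    (Λ : ∀ j, H →L[ℂ] Hs j) :
    (∃ A B : ℝ, 0 < A ∧ A ≤ B ∧
      ∀ f : H,
        Summable (fun j => (v j) ^ 2 * ‖Λ j (gfProj W j f)‖ ^ 2) ∧
        A * ‖f‖ ^ 2 ≤ ∑' j, (v j) ^ 2 * ‖Λ j (gfProj W j f)‖ ^ 2 ∧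
        ∑' j, (v j) ^ 2 * ‖Λ j (gfProj W j f)‖ ^ 2 ≤ B * ‖f‖ ^ 2)
      ↔
    ∃ T : lp Hs 2 →L[ℂ] H, Function.Surjective T ∧
      ∀ g : lp Hs 2,
        HasSum (fun j => v j • gfProj W j (adjoint (Λ j) (g j))) (T g) :=
  gfusion_frame_iff_synthesis_surjective_general W v Λ
end

section
/- Let (W_j, Θ_j) be a gf-orthonormal basis for H with respect to {v_j}, let Λ = (W_j, Λ_j, v_j) be a Parseval g-fusion frame for H, and let V : H → H be the bounded operator V f = Σ_{j∈J} v_j² π_{W_j} Λ_j* Θ_j π_{W_j} f, which satisfies Λ_j π_{W_j} = Θ_j π_{W_j} V* for all j ∈ J. Then V* is an isometry. -/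
open scoped InnerProductSpace
open ContinuousLinearMap

theorem gf_parseval_frame_operator_adjoint_isometry_general
    {H : Type*} [NormedAddCommGroup H] [InnerProductSpace ℂ H] [CompleteSpace H]
    {J : Type*}
    {Hs : J → Type*} [∀ j, NormedAddCommGroup (Hs j)] [∀ j, InnerProductSpace ℂ (Hs j)]
    (W : J → Submodule ℂ H) [∀ j, CompleteSpace (W j)]
    (v : J → ℝ)
    (Θ : ∀ j, H →L[ℂ] Hs j) (Λ : ∀ j, H →L[ℂ] Hs j)
    (hΘ_parseval : ∀ f : H,
        HasSum (fun j => (v j) ^ 2 * ‖Θ j (gfProj W j f)‖ ^ 2) (‖f‖ ^ 2))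
    (hΛ_parseval : ∀ f : H,
        HasSum (fun j => (v j) ^ 2 * ‖Λ j (gfProj W j f)‖ ^ 2) (‖f‖ ^ 2))
    (V : H →L[ℂ] H)
    (hVadj : ∀ j (f : H), Λ j (gfProj W j f) = Θ j (gfProj W j (adjoint V f))) :
    ∀ f : H, ‖adjoint V f‖ = ‖f‖ := by
  intro f
  have h : ‖adjoint V f‖ ^ 2 = ‖f‖ ^ 2 :=
    (hΘ_parseval (adjoint V f)).unique (by simpa only [hVadj] using hΛ_parseval f)
  exact (pow_left_inj₀ (norm_nonneg _) (norm_nonneg _) two_ne_zero).1 h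

/-- if `Λ` is a Parseval g-fusion frame and `V f = Σ_j v_j² π_{W_j} Λ_j* Θ_j π_{W_j} f`
with `Λ_j π_{W_j} = Θ_j π_{W_j} V*`, where `(W_j, Θ_j)` is a gf-orthonormal basis, then `V*`
is an isometry. -/
theorem gf_parseval_frame_operator_adjoint_isometry
    {H : Type*} [NormedAddCommGroup H] [InnerProductSpace ℂ H] [CompleteSpace H]
    {J : Type*} [Countable J]
    {Hs : J → Type*} [∀ j, NormedAddCommGroup (Hs j)] [∀ j, InnerProductSpace ℂ (Hs j)]
    [∀ j, CompleteSpace (Hs j)]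
    (W : J → Submodule ℂ H) [∀ j, CompleteSpace (W j)]
    (v : J → ℝ) (hv : ∀ j, 0 < v j)
    (Θ : ∀ j, H →L[ℂ] Hs j) (Λ : ∀ j, H →L[ℂ] Hs j)
    (hΘ_orth_eq : ∀ j (g g' : Hs j),
        ⟪v j • gfProj W j (adjoint (Θ j) g), v j • gfProj W j (adjoint (Θ j) g')⟫_ℂ
          = ⟪g, g'⟫_ℂ)
    (hΘ_orth_ne : ∀ i j, i ≠ j → ∀ (gi : Hs i) (gj : Hs j),
        ⟪v i • gfProj W i (adjoint (Θ i) gi), v j • gfProj W j (adjoint (Θ j) gj)⟫_ℂ = 0)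
    (hΘ_parseval : ∀ f : H,
        HasSum (fun j => (v j) ^ 2 * ‖Θ j (gfProj W j f)‖ ^ 2) (‖f‖ ^ 2))
    (hΛ_parseval : ∀ f : H,
        HasSum (fun j => (v j) ^ 2 * ‖Λ j (gfProj W j f)‖ ^ 2) (‖f‖ ^ 2))
    (V : H →L[ℂ] H)
    (hV : ∀ f : H,
        HasSum (fun j => ((v j) ^ 2 : ℝ) •
          gfProj W j (adjoint (Λ j) (Θ j (gfProj W j f)))) (V f))
    (hVadj : ∀ j (f : H), Λ j (gfProj W j f) = Θ j (gfProj W j (adjoint V f))) :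
    ∀ f : H, ‖adjoint V f‖ = ‖f‖ :=
  gf_parseval_frame_operator_adjoint_isometry_general W v Θ Λ hΘ_parseval hΛ_parseval V hVadj
end

section
/- Let (W_j, Θ_j) be a gf-orthonormal basis for H with respect to {v_j}, let Λ = (W_j, Λ_j, v_j) be a gf-Riesz basis for H, and let V : H → H be the bounded operator V f = Σ_{j∈J} v_j² π_{W_j} Λ_j* Θ_j π_{W_j} f. Then V is invertible (bijective with bounded inverse). -/
/-!
Put `U_j g = v_j π_{W_j} Θ_j* g` and `L_j g = v_j π_{W_j} Λ_j* g`. Orthonormality says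
`U_i* U_j = δ_ij`, and `V = Σ_j L_j U_j*`, so `V U_k = L_k`: the range of `V` contains every
`π_{W_k} Λ_k* g`, hence is dense by gf-completeness. Parseval says `Σ_j ‖U_j* f‖² = ‖f‖²`, so the
lower Riesz bound applied to `g_j = U_j* f` gives `A ‖f‖² ≤ ‖V f‖²`. An operator that is bounded
below and has dense range is invertible.
-/

open scoped InnerProductSpace
open ContinuousLinearMap

theorem mul_le_sq_norm_of_hasSum {ι E : Type*} [SeminormedAddCommGroup E] {A a : ℝ} {x : E}
    {c : ι → ℝ} {y : ι → E} (h : ∀ s : Finset ι, A * ∑ i ∈ s, c i ≤ ‖∑ i ∈ s, y i‖ ^ 2)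
    (hc : HasSum c a) (hy : HasSum y x) : A * a ≤ ‖x‖ ^ 2 :=
  le_of_tendsto_of_tendsto' (hc.const_mul A) (hy.norm.pow 2) h

namespace ContinuousLinearMap

theorem exists_antilipschitzWith_of_mul_sq_norm_le {𝕜 E F : Type*} [NormedField 𝕜]
    [SeminormedAddCommGroup E] [NormedSpace 𝕜 E] [SeminormedAddCommGroup F] [NormedSpace 𝕜 F]
    (f : E →L[𝕜] F) {A : ℝ} (hA : 0 < A) (h : ∀ x, A * ‖x‖ ^ 2 ≤ ‖f x‖ ^ 2) :
    ∃ K, AntilipschitzWith K f := by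
  refine ⟨(√A⁻¹).toNNReal, f.antilipschitz_of_bound fun x => ?_⟩
  rw [Real.coe_toNNReal _ (Real.sqrt_nonneg _),
    ← pow_le_pow_iff_left₀ (norm_nonneg x) (by positivity) two_ne_zero, mul_pow,
    Real.sq_sqrt (inv_nonneg.2 hA.le), inv_mul_eq_div, le_div_iff₀' hA]
  exact h x

variable {𝕜 E F : Type*} [RCLike 𝕜] [NormedAddCommGroup E] [InnerProductSpace 𝕜 E]
  [CompleteSpace E] [NormedAddCommGroup F] [InnerProductSpace 𝕜 F] [CompleteSpace F]

theorem inner_map_map_eq_zero_iff_adjoint_comp_eq_zero {G : Type*} [NormedAddCommGroup G]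
    [InnerProductSpace 𝕜 G] (u : E →L[𝕜] F) (w : G →L[𝕜] F) :
    (∀ x y, ⟪u x, w y⟫_𝕜 = 0) ↔ adjoint u ∘L w = 0 := by
  refine ⟨fun h => ext fun y => ext_inner_left 𝕜 fun x => ?_, fun h x y => ?_⟩
  · rw [comp_apply, adjoint_inner_right, zero_apply, inner_zero_right, h]
  · rw [← adjoint_inner_right, ← comp_apply, h, zero_apply, inner_zero_right]

theorem apply_eq_of_hasSum_of_adjoint_comp {ι G : Type*} {E : ι → Type*}
    [∀ i, NormedAddCommGroup (E i)] [∀ i, InnerProductSpace 𝕜 (E i)] [∀ i, CompleteSpace (E i)]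
    [NormedAddCommGroup G] [NormedSpace 𝕜 G] {U : ∀ i, E i →L[𝕜] F} {L : ∀ i, E i →L[𝕜] G}
    {V : F → G} (hV : ∀ f, HasSum (fun i => L i (adjoint (U i) f)) (V f))
    (hU : ∀ i, adjoint (U i) ∘L U i = 1) (hU' : ∀ i j, i ≠ j → adjoint (U i) ∘L U j = 0)
    (k : ι) (g : E k) : V (U k g) = L k g := by
  refine (hV (U k g)).unique ?_
  convert hasSum_single k fun i hik => ?_
  · rw [← comp_apply (adjoint (U k)), hU, one_apply_eq_self]
  · rw [← comp_apply (adjoint (U i)), hU' i k hik, zero_apply, map_zero]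

end ContinuousLinearMap

section

variable {H : Type*} [NormedAddCommGroup H] [InnerProductSpace ℂ H] [CompleteSpace H]
  {J : Type*} {Hs : J → Type*} [∀ j, NormedAddCommGroup (Hs j)] [∀ j, InnerProductSpace ℂ (Hs j)]
  [∀ j, CompleteSpace (Hs j)] (W : J → Submodule ℂ H) [∀ j, CompleteSpace (W j)] (v : J → ℝ)

noncomputable def gfSynthesis (Θ : ∀ j, H →L[ℂ] Hs j) (j : J) : Hs j →L[ℂ] H :=
  v j • (gfProj W j ∘L adjoint (Θ j))

variable {W v} {Θ Λ : ∀ j, H →L[ℂ] Hs j} {j : J}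

theorem gfSynthesis_apply (g : Hs j) :
    gfSynthesis W v Θ j g = v j • gfProj W j (adjoint (Θ j) g) := rfl

theorem adjoint_gfProj : adjoint (gfProj W j) = gfProj W j :=
  (isSelfAdjoint_starProjection (W j)).adjoint_eq

theorem adjoint_gfSynthesis : adjoint (gfSynthesis W v Θ j) = v j • (Θ j ∘L gfProj W j) := by
  rw [gfSynthesis, RCLike.real_smul_eq_coe_smul (K := ℂ), map_smulₛₗ, adjoint_comp,
    adjoint_adjoint, adjoint_gfProj, RCLike.conj_ofReal, ← RCLike.real_smul_eq_coe_smul]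

theorem adjoint_gfSynthesis_apply (f : H) :
    adjoint (gfSynthesis W v Θ j) f = v j • Θ j (gfProj W j f) := by
  rw [adjoint_gfSynthesis]
  rfl

theorem norm_adjoint_gfSynthesis_apply_sq (f : H) :
    ‖adjoint (gfSynthesis W v Θ j) f‖ ^ 2 = v j ^ 2 * ‖Θ j (gfProj W j f)‖ ^ 2 := by
  rw [adjoint_gfSynthesis_apply, norm_smul, mul_pow, Real.norm_eq_abs, sq_abs]

theorem gfSynthesis_apply_adjoint_gfSynthesis_apply (f : H) :
    gfSynthesis W v Λ j (adjoint (gfSynthesis W v Θ j) f)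
      = (v j ^ 2 : ℝ) • gfProj W j (adjoint (Λ j) (Θ j (gfProj W j f))) := by
  rw [adjoint_gfSynthesis_apply, gfSynthesis_apply, map_smul_of_tower, map_smul_of_tower,
    smul_smul, sq]

theorem gfSynthesis_inv_smul (hv : v j ≠ 0) (g : Hs j) :
    gfSynthesis W v Λ j ((v j)⁻¹ • g) = gfProj W j (adjoint (Λ j) g) := by
  rw [map_smul_of_tower, gfSynthesis_apply, smul_smul, inv_mul_cancel₀ hv, one_smul]

end

theorem gf_riesz_basis_operator_invertible_general
    {H : Type*} [NormedAddCommGroup H] [InnerProductSpace ℂ H] [CompleteSpace H]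
    {J : Type*}
    {Hs : J → Type*} [∀ j, NormedAddCommGroup (Hs j)] [∀ j, InnerProductSpace ℂ (Hs j)]
    [∀ j, CompleteSpace (Hs j)]
    (W : J → Submodule ℂ H) [∀ j, CompleteSpace (W j)]
    (v : J → ℝ) (hv : ∀ j, 0 < v j)
    (Θ : ∀ j, H →L[ℂ] Hs j) (Λ : ∀ j, H →L[ℂ] Hs j)
    (hΘ_orth_eq : ∀ j (g g' : Hs j),
        ⟪v j • gfProj W j (adjoint (Θ j) g), v j • gfProj W j (adjoint (Θ j) g')⟫_ℂ
          = ⟪g, g'⟫_ℂ)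
    (hΘ_orth_ne : ∀ i j, i ≠ j → ∀ (gi : Hs i) (gj : Hs j),
        ⟪v i • gfProj W i (adjoint (Θ i) gi), v j • gfProj W j (adjoint (Θ j) gj)⟫_ℂ = 0)
    (hΘ_parseval : ∀ f : H,
        HasSum (fun j => (v j) ^ 2 * ‖Θ j (gfProj W j f)‖ ^ 2) (‖f‖ ^ 2))
    (A B : ℝ) (hA : 0 < A)
    (hΛ_complete : (Submodule.span ℂ
        (⋃ j, Set.range fun g : Hs j => gfProj W j (adjoint (Λ j) g))).topologicalClosure
      = ⊤)
    (hΛ_riesz : ∀ (s : Finset J) (g : ∀ j, Hs j),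
        A * ∑ j ∈ s, ‖g j‖ ^ 2 ≤ ‖∑ j ∈ s, v j • gfProj W j (adjoint (Λ j) (g j))‖ ^ 2 ∧
        ‖∑ j ∈ s, v j • gfProj W j (adjoint (Λ j) (g j))‖ ^ 2 ≤ B * ∑ j ∈ s, ‖g j‖ ^ 2)
    (V : H →L[ℂ] H)
    (hV : ∀ f : H,
        HasSum (fun j => ((v j) ^ 2 : ℝ) •
          gfProj W j (adjoint (Λ j) (Θ j (gfProj W j f)))) (V f)) :
    ∃ E : H ≃L[ℂ] H, ∀ f : H, E f = V f := by
  set U := gfSynthesis W v Θ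
  set L := gfSynthesis W v Λ
  have hVsum (f : H) : HasSum (fun j => L j (adjoint (U j) f)) (V f) := by
    simpa only [L, U, gfSynthesis_apply_adjoint_gfSynthesis_apply] using hV f
  have hU_orth_eq (j : J) : adjoint (U j) ∘L U j = 1 :=
    (inner_map_map_iff_adjoint_comp_self _).1 (hΘ_orth_eq j)
  have hU_orth_ne (i j : J) (hij : i ≠ j) : adjoint (U i) ∘L U j = 0 :=
    (inner_map_map_eq_zero_iff_adjoint_comp_eq_zero _ _).1 (hΘ_orth_ne i j hij)
  have hlower (f : H) : A * ‖f‖ ^ 2 ≤ ‖V f‖ ^ 2 := by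
    refine mul_le_sq_norm_of_hasSum (fun s => (hΛ_riesz s fun j => adjoint (U j) f).1) ?_
      (hVsum f)
    simpa only [U, norm_adjoint_gfSynthesis_apply_sq] using hΘ_parseval f
  have hdense : V.range.topologicalClosure = ⊤ := by
    refine top_unique (hΛ_complete ▸ Submodule.topologicalClosure_mono (Submodule.span_le.2 ?_))
    rintro _ ⟨_, ⟨k, rfl⟩, g, rfl⟩
    refine ⟨U k ((v k)⁻¹ • g), ?_⟩
    change V _ = _
    rw [apply_eq_of_hasSum_of_adjoint_comp hVsum hU_orth_eq hU_orth_ne,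
      gfSynthesis_inv_smul (hv k).ne']
  obtain ⟨hinj, hsurj⟩ := V.bijective_iff_dense_range_and_antilipschitz.2
    ⟨hdense, V.exists_antilipschitzWith_of_mul_sq_norm_le hA hlower⟩
  exact ⟨.ofBijective V (LinearMap.ker_eq_bot.2 hinj) (LinearMap.range_eq_top.2 hsurj),
    fun _ => rfl⟩

/-- if `(W_j, Θ_j)` is a gf-orthonormal basis, `Λ = (W_j, Λ_j, v_j)` is a
gf-Riesz basis, and `V f = Σ_j v_j² π_{W_j} Λ_j* Θ_j π_{W_j} f`, then `V` is invertible. -/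
theorem gf_riesz_basis_operator_invertible
    {H : Type*} [NormedAddCommGroup H] [InnerProductSpace ℂ H] [CompleteSpace H]
    {J : Type*} [Countable J]
    {Hs : J → Type*} [∀ j, NormedAddCommGroup (Hs j)] [∀ j, InnerProductSpace ℂ (Hs j)]
    [∀ j, CompleteSpace (Hs j)]
    (W : J → Submodule ℂ H) [∀ j, CompleteSpace (W j)]
    (v : J → ℝ) (hv : ∀ j, 0 < v j)
    (Θ : ∀ j, H →L[ℂ] Hs j) (Λ : ∀ j, H →L[ℂ] Hs j)
    (hΘ_orth_eq : ∀ j (g g' : Hs j),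
        ⟪v j • gfProj W j (adjoint (Θ j) g), v j • gfProj W j (adjoint (Θ j) g')⟫_ℂ
          = ⟪g, g'⟫_ℂ)
    (hΘ_orth_ne : ∀ i j, i ≠ j → ∀ (gi : Hs i) (gj : Hs j),
        ⟪v i • gfProj W i (adjoint (Θ i) gi), v j • gfProj W j (adjoint (Θ j) gj)⟫_ℂ = 0)
    (hΘ_parseval : ∀ f : H,
        HasSum (fun j => (v j) ^ 2 * ‖Θ j (gfProj W j f)‖ ^ 2) (‖f‖ ^ 2))
    (A B : ℝ) (hA : 0 < A) (hAB : A ≤ B)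
    (hΛ_complete : (Submodule.span ℂ
        (⋃ j, Set.range fun g : Hs j => gfProj W j (adjoint (Λ j) g))).topologicalClosure
      = ⊤)
    (hΛ_riesz : ∀ (s : Finset J) (g : ∀ j, Hs j),
        A * ∑ j ∈ s, ‖g j‖ ^ 2 ≤ ‖∑ j ∈ s, v j • gfProj W j (adjoint (Λ j) (g j))‖ ^ 2 ∧
        ‖∑ j ∈ s, v j • gfProj W j (adjoint (Λ j) (g j))‖ ^ 2 ≤ B * ∑ j ∈ s, ‖g j‖ ^ 2)
    (V : H →L[ℂ] H)
    (hV : ∀ f : H,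
        HasSum (fun j => ((v j) ^ 2 : ℝ) •
          gfProj W j (adjoint (Λ j) (Θ j (gfProj W j f)))) (V f)) :
    ∃ E : H ≃L[ℂ] H, ∀ f : H, E f = V f :=
  gf_riesz_basis_operator_invertible_general W v hv Θ Λ hΘ_orth_eq hΘ_orth_ne hΘ_parseval A B hA
    hΛ_complete hΛ_riesz V hV
end

section
/- Λ = (W_j, Λ_j, v_j) is a gf-Riesz basis for H with bounds A, B if and only if the induced sequence {u_{j,k} : j ∈ J, k ∈ K_j} is a Riesz basis for H with bounds A, B, i.e. its closed linear span is H and A Σ |c_{j,k}|² ≤ ‖Σ c_{j,k} u_{j,k}‖² ≤ B Σ |c_{j,k}|² for every finitely supported family of scalars (c_{j,k}). -/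
/-!
Put `T j := v j • π_{W j} ∘ Λ j*`, so that `u j k = T j (e j k)`. A finitely supported scalar
family `c` corresponds to the vectors `g j := ∑ k, c ⟨j, k⟩ • e j k`; orthonormality gives
`∑ ‖g j‖² = ∑ ‖c p‖²`, and `∑ T j (g j) = ∑ c p • u p`. So the scalar Riesz bounds are the
gf-Riesz bounds restricted to `g j` in the span of `e j`, and they extend to all `g` because both
sides are continuous in `g` and these spans are dense. Completeness transfers because each `T j`
maps the dense span of `e j` into the closed span of the `u`, while `v j ≠ 0` gives
`range (T j) = range (π_{W j} ∘ Λ j*)`.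
-/

open scoped InnerProductSpace
open ContinuousLinearMap

theorem Orthonormal.norm_sum_smul_sq {𝕜 E ι : Type*} [RCLike 𝕜] [NormedAddCommGroup E]
    [InnerProductSpace 𝕜 E] {v : ι → E} (hv : Orthonormal 𝕜 v) (c : ι → 𝕜) (s : Finset ι) :
    ‖∑ i ∈ s, c i • v i‖ ^ 2 = ∑ i ∈ s, ‖c i‖ ^ 2 := by
  simpa using hv.orthogonalFamily.norm_sum c s

section RieszBounds

variable {𝕜 F ι : Type*} [RCLike 𝕜] [NormedAddCommGroup F] [InnerProductSpace 𝕜 F]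
  {J : Type*} {E : J → Type*} [∀ j, NormedAddCommGroup (E j)] [∀ j, InnerProductSpace 𝕜 (E j)]
  {K : J → Type*}

def HasRieszBounds (A B : ℝ) (x : ι → F) : Prop :=
  ∀ (s : Finset ι) (c : ι → 𝕜),
    A * ∑ i ∈ s, ‖c i‖ ^ 2 ≤ ‖∑ i ∈ s, c i • x i‖ ^ 2 ∧
    ‖∑ i ∈ s, c i • x i‖ ^ 2 ≤ B * ∑ i ∈ s, ‖c i‖ ^ 2

def HasFusionRieszBounds (A B : ℝ) (T : ∀ j, E j →L[𝕜] F) : Prop :=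
  ∀ (s : Finset J) (g : ∀ j, E j),
    A * ∑ j ∈ s, ‖g j‖ ^ 2 ≤ ‖∑ j ∈ s, T j (g j)‖ ^ 2 ∧
    ‖∑ j ∈ s, T j (g j)‖ ^ 2 ≤ B * ∑ j ∈ s, ‖g j‖ ^ 2

theorem sum_sigma_smul_apply (T : ∀ j, E j →L[𝕜] F) (e : ∀ j, K j → E j) (s : Finset J)
    (t : ∀ j, Finset (K j)) (c : (Σ j, K j) → 𝕜) :
    ∑ p ∈ s.sigma t, c p • T p.1 (e p.1 p.2) = ∑ j ∈ s, T j (∑ k ∈ t j, c ⟨j, k⟩ • e j k) := by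
  simp only [Finset.sum_sigma, map_sum, map_smul]

theorem sum_sigma_norm_sq_of_orthonormal {e : ∀ j, K j → E j} (he : ∀ j, Orthonormal 𝕜 (e j))
    (s : Finset J) (t : ∀ j, Finset (K j)) (c : (Σ j, K j) → 𝕜) :
    ∑ p ∈ s.sigma t, ‖c p‖ ^ 2 = ∑ j ∈ s, ‖∑ k ∈ t j, c ⟨j, k⟩ • e j k‖ ^ 2 := by
  simp only [Finset.sum_sigma, (he _).norm_sum_smul_sq]

theorem hasFusionRieszBounds_iff_hasRieszBounds_sigma (T : ∀ j, E j →L[𝕜] F)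
    (e : ∀ j, HilbertBasis (K j) 𝕜 (E j)) (A B : ℝ) :
    HasFusionRieszBounds A B T ↔
      HasRieszBounds (𝕜 := 𝕜) A B (fun p : Σ j, K j => T p.1 (e p.1 p.2)) := by
  have he : ∀ j, Orthonormal 𝕜 (e j) := fun j => (e j).orthonormal
  constructor
  · intro h S c
    classical
    rw [← S.sigma_image_fst_preimage_mk, sum_sigma_smul_apply T fun j => e j,
      sum_sigma_norm_sq_of_orthonormal he]
    exact h _ _
  · intro h s
    have hdense : Dense (Set.univ.pi fun j => (Submodule.span 𝕜 (Set.range (e j)) : Set (E j))) :=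
      dense_pi _ fun j _ => Submodule.dense_iff_topologicalClosure_eq_top.mpr (e j).dense_span
    refine hdense.induction (fun g hg => ?_) ?_
    · choose c hc using fun j => Finsupp.mem_span_range_iff_exists_finsupp.mp (hg j trivial)
      have := h (s.sigma fun j => (c j).support) (fun p => c p.1 p.2)
      rw [sum_sigma_smul_apply T fun j => e j, sum_sigma_norm_sq_of_orthonormal he] at this
      simp only [Finsupp.sum] at hc
      simpa only [hc] using this
    · rw [Set.ofPred_and]
      exact (isClosed_le (by fun_prop) (by fun_prop)).inter
        (isClosed_le (by fun_prop) (by fun_prop))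

theorem topologicalClosure_span_iUnion_range_eq (T : ∀ j, E j →L[𝕜] F)
    (e : ∀ j, HilbertBasis (K j) 𝕜 (E j)) :
    (Submodule.span 𝕜 (⋃ j, Set.range (T j))).topologicalClosure =
      (Submodule.span 𝕜 (Set.range fun p : Σ j, K j => T p.1 (e p.1 p.2))).topologicalClosure := by
  refine le_antisymm
    (Submodule.topologicalClosure_minimal _ ?_ (Submodule.isClosed_topologicalClosure _))
    (Submodule.topologicalClosure_mono (Submodule.span_mono ?_))
  · rw [Submodule.span_le, Set.iUnion_subset_iff]
    intro j
    have := (Submodule.span 𝕜 (Set.range (e j))).topologicalClosure_map (T j)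
    rw [(e j).dense_span, Submodule.map_span, ← Set.range_comp] at this
    rintro _ ⟨g, rfl⟩
    refine Submodule.topologicalClosure_mono (Submodule.span_mono ?_)
      (this (Submodule.mem_map_of_mem Submodule.mem_top))
    rintro _ ⟨k, rfl⟩
    exact ⟨⟨j, k⟩, rfl⟩
  · rintro _ ⟨p, rfl⟩
    exact Set.mem_iUnion_of_mem p.1 ⟨_, rfl⟩

end RieszBounds

theorem gf_riesz_basis_iff_induced_riesz_basis_general
    {H : Type*} [NormedAddCommGroup H] [InnerProductSpace ℂ H] [CompleteSpace H]
    {J : Type*}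
    {Hs : J → Type*} [∀ j, NormedAddCommGroup (Hs j)] [∀ j, InnerProductSpace ℂ (Hs j)]
    [∀ j, CompleteSpace (Hs j)]
    (W : J → Submodule ℂ H) [∀ j, CompleteSpace (W j)]
    (v : J → ℝ) (hv : ∀ j, 0 < v j)
    (Λ : ∀ j, H →L[ℂ] Hs j)
    (K : J → Type*)
    (e : ∀ j, HilbertBasis (K j) ℂ (Hs j))
    (u : ∀ j, K j → H)
    (hu : ∀ j k, u j k = v j • gfProj W j (adjoint (Λ j) (e j k)))
    (A B : ℝ) :
    ((Submodule.span ℂ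
        (⋃ j, Set.range fun g : Hs j => gfProj W j (adjoint (Λ j) g))).topologicalClosure
        = ⊤ ∧
     ∀ (s : Finset J) (g : ∀ j, Hs j),
        A * ∑ j ∈ s, ‖g j‖ ^ 2 ≤ ‖∑ j ∈ s, v j • gfProj W j (adjoint (Λ j) (g j))‖ ^ 2 ∧
        ‖∑ j ∈ s, v j • gfProj W j (adjoint (Λ j) (g j))‖ ^ 2 ≤ B * ∑ j ∈ s, ‖g j‖ ^ 2)
      ↔
    ((Submodule.span ℂ (Set.range fun p : Σ j, K j => u p.1 p.2)).topologicalClosure = ⊤ ∧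
     ∀ (s : Finset (Σ j, K j)) (c : (Σ j, K j) → ℂ),
        A * ∑ p ∈ s, ‖c p‖ ^ 2 ≤ ‖∑ p ∈ s, c p • u p.1 p.2‖ ^ 2 ∧
        ‖∑ p ∈ s, c p • u p.1 p.2‖ ^ 2 ≤ B * ∑ p ∈ s, ‖c p‖ ^ 2) := by
  let T : ∀ j, Hs j →L[ℂ] H := fun j => v j • (gfProj W j).comp (adjoint (Λ j))
  obtain rfl : u = fun j k => T j (e j k) := funext₂ hu
  have hrange (j : J) : Set.range (T j) = Set.range fun g => gfProj W j (adjoint (Λ j) g) := by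
    have hv' : (v j : ℂ) ≠ 0 := mod_cast (hv j).ne'
    ext x
    constructor
    · rintro ⟨g, rfl⟩
      exact ⟨(v j : ℂ) • g, by simp [T, Complex.coe_smul]⟩
    · rintro ⟨g, rfl⟩
      exact ⟨(v j : ℂ)⁻¹ • g, by simp [T, ← Complex.coe_smul, smul_smul, hv']⟩
  simp only [← hrange]
  exact and_congr (by rw [topologicalClosure_span_iUnion_range_eq T e])
    (hasFusionRieszBounds_iff_hasRieszBounds_sigma T e A B)

/-- `Λ = (W_j, Λ_j, v_j)` is a gf-Riesz basis for `H` with bounds `A, B` iff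
the induced sequence `{u_{j,k}}` is a Riesz basis for `H` with bounds `A, B`. -/
theorem gf_riesz_basis_iff_induced_riesz_basis
    {H : Type*} [NormedAddCommGroup H] [InnerProductSpace ℂ H] [CompleteSpace H]
    {J : Type*} [Countable J]
    {Hs : J → Type*} [∀ j, NormedAddCommGroup (Hs j)] [∀ j, InnerProductSpace ℂ (Hs j)]
    [∀ j, CompleteSpace (Hs j)]
    (W : J → Submodule ℂ H) [∀ j, CompleteSpace (W j)]
    (v : J → ℝ) (hv : ∀ j, 0 < v j)
    (Λ : ∀ j, H →L[ℂ] Hs j)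
    (K : J → Type*) [∀ j, Countable (K j)]
    (e : ∀ j, HilbertBasis (K j) ℂ (Hs j))
    (u : ∀ j, K j → H)
    (hu : ∀ j k, u j k = v j • gfProj W j (adjoint (Λ j) (e j k)))
    (A B : ℝ) (hA : 0 < A) (hAB : A ≤ B) :
    ((Submodule.span ℂ
        (⋃ j, Set.range fun g : Hs j => gfProj W j (adjoint (Λ j) g))).topologicalClosure
        = ⊤ ∧
     ∀ (s : Finset J) (g : ∀ j, Hs j),
        A * ∑ j ∈ s, ‖g j‖ ^ 2 ≤ ‖∑ j ∈ s, v j • gfProj W j (adjoint (Λ j) (g j))‖ ^ 2 ∧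
        ‖∑ j ∈ s, v j • gfProj W j (adjoint (Λ j) (g j))‖ ^ 2 ≤ B * ∑ j ∈ s, ‖g j‖ ^ 2)
      ↔
    ((Submodule.span ℂ (Set.range fun p : Σ j, K j => u p.1 p.2)).topologicalClosure = ⊤ ∧
     ∀ (s : Finset (Σ j, K j)) (c : (Σ j, K j) → ℂ),
        A * ∑ p ∈ s, ‖c p‖ ^ 2 ≤ ‖∑ p ∈ s, c p • u p.1 p.2‖ ^ 2 ∧
        ‖∑ p ∈ s, c p • u p.1 p.2‖ ^ 2 ≤ B * ∑ p ∈ s, ‖c p‖ ^ 2) :=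
  gf_riesz_basis_iff_induced_riesz_basis_general W v hv Λ K e u hu A B
end

section
/- Let X be a Banach space, U : X → X a linear operator, and λ₁, λ₂ ∈ [0, 1) such that ‖x − Ux‖ ≤ λ₁‖x‖ + λ₂‖Ux‖ for all x ∈ X. Then U is bounded and invertible (bijective with bounded inverse), and for all x ∈ X: ((1−λ₁)/(1+λ₂))‖x‖ ≤ ‖Ux‖ ≤ ((1+λ₁)/(1−λ₂))‖x‖ and ((1−λ₂)/(1+λ₁))‖x‖ ≤ ‖U⁻¹x‖ ≤ ((1+λ₂)/(1−λ₁))‖x‖. -/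
set_option maxHeartbeats 1000000


/-- Lemma on invertibility of perturbed operators: if `U : X → X` is linear
on a Banach space `X` and `‖x − Ux‖ ≤ λ₁‖x‖ + λ₂‖Ux‖` with `λ₁, λ₂ ∈ [0,1)`, then `U` is
bounded and invertible, with the stated two-sided norm bounds for `U` and `U⁻¹`. -/
theorem perturbed_identity_invertible
    {𝕜 : Type*} [RCLike 𝕜]
    {X : Type*} [NormedAddCommGroup X] [NormedSpace 𝕜 X] [CompleteSpace X]
    (U : X →ₗ[𝕜] X) (lam₁ lam₂ : ℝ)
    (h₁ : 0 ≤ lam₁) (h₁' : lam₁ < 1) (h₂ : 0 ≤ lam₂) (h₂' : lam₂ < 1)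
    (hU : ∀ x : X, ‖x - U x‖ ≤ lam₁ * ‖x‖ + lam₂ * ‖U x‖) :
    ∃ V : X ≃L[𝕜] X, (∀ x : X, V x = U x) ∧
      (∀ x : X,
        (1 - lam₁) / (1 + lam₂) * ‖x‖ ≤ ‖U x‖ ∧
        ‖U x‖ ≤ (1 + lam₁) / (1 - lam₂) * ‖x‖) ∧
      (∀ x : X,
        (1 - lam₂) / (1 + lam₁) * ‖x‖ ≤ ‖V.symm x‖ ∧
        ‖V.symm x‖ ≤ (1 + lam₂) / (1 - lam₁) * ‖x‖) := by
  have hl2 : (0:ℝ) < 1 - lam₂ := by linarith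
  have hl1 : (0:ℝ) < 1 - lam₁ := by linarith
  have hp2 : (0:ℝ) < 1 + lam₂ := by linarith
  have hp1 : (0:ℝ) < 1 + lam₁ := by linarith
  -- upper bound for U
  have hupU : ∀ x : X, ‖U x‖ ≤ (1 + lam₁) / (1 - lam₂) * ‖x‖ := by
    intro x
    have h1 := norm_sub_norm_le (U x) x
    rw [norm_sub_rev] at h1
    have h2 := hU x
    rw [div_mul_eq_mul_div, le_div_iff₀ hl2]
    nlinarith
  -- general lower bound lemma
  have hlowgen : ∀ h : X → X, (∀ x, ‖x - h x‖ ≤ lam₁ * ‖x‖ + lam₂ * ‖h x‖) →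
      ∀ x, (1 - lam₁) / (1 + lam₂) * ‖x‖ ≤ ‖h x‖ := by
    intro h hh x
    have h1 := norm_sub_norm_le x (x - h x)
    rw [sub_sub_cancel] at h1
    have h2 := hh x
    rw [div_mul_eq_mul_div, div_le_iff₀ hp2]
    nlinarith
  have hlowU : ∀ x : X, (1 - lam₁) / (1 + lam₂) * ‖x‖ ≤ ‖U x‖ := fun x => hlowgen (fun z => U z) hU x
  -- the continuous linear map
  set f : X →L[𝕜] X := U.mkContinuous ((1 + lam₁) / (1 - lam₂)) hupU with hfdef
  have hf : ∀ x, f x = U x := fun x => rfl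
  by_cases hXsub : Subsingleton X
  · refine ⟨ContinuousLinearEquiv.refl 𝕜 X, fun x => Subsingleton.elim _ _, ?_, ?_⟩ <;>
    · intro x
      have hz : ∀ z : X, ‖z‖ = (0:ℝ) := fun z => by
        rw [Subsingleton.elim z 0, norm_zero]
      simp [hz]
  have hXnt : Nontrivial X := not_subsingleton_iff_nontrivial.mp hXsub
  -- the homotopy
  set g : ℝ → (X →L[𝕜] X) := fun t => 1 + ((t:𝕜)) • (f - 1) with hgdef
  have hg_apply : ∀ (t : ℝ) (x : X), g t x = x + (t:𝕜) • (f x - x) := by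
    intro t x
    simp [hgdef, ContinuousLinearMap.add_apply, ContinuousLinearMap.smul_apply,
      ContinuousLinearMap.sub_apply, ContinuousLinearMap.one_apply]
  -- each g t satisfies the same inequality
  have hA : ∀ t ∈ Set.Icc (0:ℝ) 1, ∀ x : X,
      ‖x - g t x‖ ≤ lam₁ * ‖x‖ + lam₂ * ‖g t x‖ := by
    rintro t ⟨ht0, ht1⟩ x
    have e1 : x - g t x = -((t:𝕜) • (f x - x)) := by rw [hg_apply]; abel
    have e2 : ‖x - g t x‖ = t * ‖f x - x‖ := by
      rw [e1, norm_neg, norm_smul, RCLike.norm_ofReal, abs_of_nonneg ht0]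
    have e3 : f x = g t x + ((1 - t : ℝ):𝕜) • (f x - x) := by
      rw [hg_apply]
      push_cast
      rw [sub_smul, one_smul]
      abel
    have e4 : ‖f x‖ ≤ ‖g t x‖ + (1 - t) * ‖f x - x‖ := by
      calc ‖f x‖ ≤ ‖g t x‖ + ‖((1 - t : ℝ):𝕜) • (f x - x)‖ := by
            nth_rewrite 1 [e3]; exact norm_add_le _ _
        _ = ‖g t x‖ + (1 - t) * ‖f x - x‖ := by
            rw [norm_smul, RCLike.norm_ofReal, abs_of_nonneg (by linarith)]
    have e5 : ‖x - U x‖ = ‖f x - x‖ := by rw [hf, norm_sub_rev]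
    have h2 := hU x
    rw [e5] at h2
    rw [e2]
    have hfx : ‖U x‖ = ‖f x‖ := by rw [hf]
    rw [hfx] at h2
    nlinarith [norm_nonneg (f x - x), norm_nonneg x, norm_nonneg (g t x),
      mul_nonneg (mul_nonneg (le_of_lt hl2) (sub_nonneg.mpr ht1)) (norm_nonneg (f x - x))]
  -- lower bound for each g t
  have hglow : ∀ t ∈ Set.Icc (0:ℝ) 1, ∀ x : X,
      (1 - lam₁) / (1 + lam₂) * ‖x‖ ≤ ‖g t x‖ :=
    fun t ht => hlowgen (fun x => g t x) (hA t ht)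
  set c : ℝ := (1 - lam₁) / (1 + lam₂) with hcdef
  have hc : 0 < c := div_pos hl1 hp2
  -- inverse norm bound for units among the g t
  have hinv : ∀ t ∈ Set.Icc (0:ℝ) 1, ∀ u : (X →L[𝕜] X)ˣ, (u : X →L[𝕜] X) = g t →
      c ≤ ‖((u⁻¹ : (X →L[𝕜] X)ˣ) : X →L[𝕜] X)‖⁻¹ := by
    intro t ht u hu
    have hb : ∀ y : X, ‖((u⁻¹ : (X →L[𝕜] X)ˣ) : X →L[𝕜] X) y‖ ≤ c⁻¹ * ‖y‖ := by
      intro y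
      have h1 : (u : X →L[𝕜] X) (((u⁻¹ : (X →L[𝕜] X)ˣ) : X →L[𝕜] X) y) = y := by
        rw [← ContinuousLinearMap.mul_apply, u.mul_inv, ContinuousLinearMap.one_apply]
      have h2 := hglow t ht (((u⁻¹ : (X →L[𝕜] X)ˣ) : X →L[𝕜] X) y)
      rw [← hu, h1] at h2
      rw [inv_mul_eq_div, le_div_iff₀ hc, mul_comm]
      exact h2
    have hnorm : ‖((u⁻¹ : (X →L[𝕜] X)ˣ) : X →L[𝕜] X)‖ ≤ c⁻¹ :=
      ContinuousLinearMap.opNorm_le_bound _ (le_of_lt (inv_pos.mpr hc)) hb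
    have hpos : 0 < ‖((u⁻¹ : (X →L[𝕜] X)ˣ) : X →L[𝕜] X)‖ := by
      obtain ⟨x, hx⟩ := exists_ne (0 : X)
      have h1 : ((u⁻¹ : (X →L[𝕜] X)ˣ) : X →L[𝕜] X) ((u : X →L[𝕜] X) x) = x := by
        rw [← ContinuousLinearMap.mul_apply, u.inv_mul, ContinuousLinearMap.one_apply]
      by_contra hcon
      push_neg at hcon
      have h0 : ((u⁻¹ : (X →L[𝕜] X)ˣ) : X →L[𝕜] X) = 0 := by
        have := norm_nonneg ((u⁻¹ : (X →L[𝕜] X)ˣ) : X →L[𝕜] X)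
        have : ‖((u⁻¹ : (X →L[𝕜] X)ˣ) : X →L[𝕜] X)‖ = 0 := le_antisymm hcon this
        exact norm_eq_zero.mp this
      rw [h0] at h1
      simp at h1
      exact hx h1.symm
    exact (le_inv_comm₀ hc hpos).mpr hnorm
  -- step lemma
  set C : ℝ := ‖f - 1‖ + 1 with hCdef
  have hC : 0 < C := by positivity
  set δ : ℝ := c / (2 * C) with hδdef
  have hδ : 0 < δ := div_pos hc (by positivity)
  have hdiff : ∀ s t : ℝ, ‖g s - g t‖ ≤ |s - t| * ‖f - 1‖ := by
    intro s t
    have heq : g s - g t = ((s - t : ℝ):𝕜) • (f - 1) := by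
      rw [hgdef]
      push_cast
      rw [sub_smul]
      abel
    calc ‖g s - g t‖ = ‖((s - t : ℝ):𝕜) • (f - 1)‖ := by rw [heq]
      _ ≤ ‖((s - t : ℝ):𝕜)‖ * ‖f - 1‖ := ContinuousLinearMap.opNorm_smul_le _ _
      _ = |s - t| * ‖f - 1‖ := by rw [RCLike.norm_ofReal]
  have hstep : ∀ s ∈ Set.Icc (0:ℝ) 1, ∀ t ∈ Set.Icc (0:ℝ) 1, |s - t| ≤ δ →
      IsUnit (g t) → IsUnit (g s) := by
    intro s hs t ht hst hu
    have hlt : ‖g s - (hu.unit : X →L[𝕜] X)‖ <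
        ‖((hu.unit⁻¹ : (X →L[𝕜] X)ˣ) : X →L[𝕜] X)‖⁻¹ := by
      rw [hu.unit_spec]
      refine lt_of_le_of_lt (hdiff s t) ?_
      have h1 : |s - t| * ‖f - 1‖ ≤ δ * C := by
        apply mul_le_mul hst (by rw [hCdef]; linarith) (norm_nonneg _) (le_of_lt hδ)
      have h2 : δ * C = c / 2 := by rw [hδdef]; field_simp
      have h3 := hinv t ht hu.unit hu.unit_spec
      nlinarith [hc]
    exact (Units.ofNearby hu.unit (g s) hlt).isUnit
  -- induction along the path
  have hmem : ∀ n : ℕ, min ((n:ℝ) * δ) 1 ∈ Set.Icc (0:ℝ) 1 :=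
    fun n => ⟨le_min (by positivity) zero_le_one, min_le_right _ _⟩
  have hn : ∀ n : ℕ, IsUnit (g (min ((n:ℝ) * δ) 1)) := by
    intro n
    induction n with
    | zero =>
      have : min ((0:ℕ) * δ : ℝ) 1 = 0 := by norm_num
      rw [this]
      have : g 0 = 1 := by simp [hgdef]
      rw [this]
      exact isUnit_one
    | succ n ih =>
      apply hstep _ (hmem (n+1)) _ (hmem n) _ ih
      have hmono : min ((n:ℝ) * δ) 1 ≤ min (((n:ℝ)+1) * δ) 1 := by
        apply min_le_min _ le_rfl
        nlinarith
      have hupper : min (((n:ℝ)+1) * δ) 1 ≤ min ((n:ℝ) * δ) 1 + δ := by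
        have : min (((n:ℝ)+1) * δ) 1 ≤ min ((n:ℝ) * δ + δ) (1 + δ) := by
          apply min_le_min (by nlinarith) (by linarith)
        rw [min_add_add_right] at this
        exact this
      push_cast
      rw [abs_le]
      constructor <;> [linarith; linarith]
  -- conclude IsUnit f
  obtain ⟨n, hnn⟩ := exists_nat_ge (1 / δ)
  have hn1 : (1:ℝ) ≤ (n:ℝ) * δ := by
    rw [div_le_iff₀ hδ] at hnn
    linarith
  have hfu : IsUnit f := by
    have := hn n
    rw [min_eq_right hn1] at this
    have hg1 : g 1 = f := by simp [hgdef]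
    rwa [hg1] at this
  -- build the equivalence
  refine ⟨ContinuousLinearEquiv.unitsEquiv 𝕜 X hfu.unit, ?_, ?_, ?_⟩
  · intro x
    rw [ContinuousLinearEquiv.unitsEquiv_apply, hfu.unit_spec]
    exact hf x
  · exact fun x => ⟨hlowU x, hupU x⟩
  · intro x
    have hxy : U ((ContinuousLinearEquiv.unitsEquiv 𝕜 X hfu.unit).symm x) = x := by
      have h1 := (ContinuousLinearEquiv.unitsEquiv 𝕜 X hfu.unit).apply_symm_apply x
      rw [ContinuousLinearEquiv.unitsEquiv_apply, hfu.unit_spec] at h1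
      rw [← hf]
      exact h1
    set y := (ContinuousLinearEquiv.unitsEquiv 𝕜 X hfu.unit).symm x with hy
    have hup := hupU y
    have hlo := hlowU y
    rw [hxy] at hup hlo
    constructor
    · rw [div_mul_eq_mul_div, div_le_iff₀ hp1]
      rw [div_mul_eq_mul_div, le_div_iff₀ hl2] at hup
      nlinarith
    · rw [div_mul_eq_mul_div, le_div_iff₀ hl1]
      rw [div_mul_eq_mul_div, div_le_iff₀ hp2] at hlo
      nlinarith
end
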